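/- arXiv:0706.1483 — 2 statements merged into one kernel-verified Lean document; each statement's English description precedes it below -/
import Mathlib

section
/- Let vol denote Lebesgue measure on ℝ^d and let μ̃ be the pushforward measure of vol under î (a Borel measure on S_A, where S_A carries the subspace topology from the product topology on (𝕋^d)^ℕ). Then the pushforward of μ̃ under σ_A equals |det A|^{-1}·μ̃; equivalently, ∫ f∘σ_A dμ̃ = |det A|^{-1} ∫ f dμ̃ for every Borel measurable f ≥ 0 on S_A. -/
open Matrix MeasureTheory Filter Topology

noncomputable section

/-- The integer lattice ℤ^d inside ℝ^d. -/
def intLattice (d : ℕ) : AddSubgroup (Fin d → ℝ) where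
  carrier := {x | ∀ i, ∃ k : ℤ, x i = (k : ℝ)}
  zero_mem' := fun i => ⟨0, by simp⟩
  add_mem' := by
    intro x y hx hy i
    obtain ⟨a, ha⟩ := hx i
    obtain ⟨b, hb⟩ := hy i
    exact ⟨a + b, by simp [ha, hb]⟩
  neg_mem' := by
    intro x hx i
    obtain ⟨a, ha⟩ := hx i
    exact ⟨-a, by simp [ha]⟩

/-- The torus ℝ^d / ℤ^d. -/
abbrev Torus (d : ℕ) := (Fin d → ℝ) ⧸ intLattice d

/-- The quotient homomorphism π : ℝ^d → 𝕋^d. -/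
def torusMk (d : ℕ) : (Fin d → ℝ) →+ Torus d := QuotientAddGroup.mk' (intLattice d)

/-- A square integer matrix is expansive if all of its complex eigenvalues `μ`
satisfy `|μ| > 1`. -/
def Expansive {d : ℕ} (A : Matrix (Fin d) (Fin d) ℤ) : Prop :=
  ∀ μ : ℂ, (Matrix.charpoly (A.map (Int.cast : ℤ → ℂ))).IsRoot μ → 1 < ‖μ‖

/-- The real matrix associated to an integer matrix. -/
def toR {d : ℕ} (A : Matrix (Fin d) (Fin d) ℤ) : Matrix (Fin d) (Fin d) ℝ :=
  A.map (Int.cast : ℤ → ℝ)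

lemma latticeMap_aux {d : ℕ} (M : Matrix (Fin d) (Fin d) ℤ) :
    intLattice d ≤ (intLattice d).comap (toR M).mulVecLin.toAddMonoidHom := by
  intro x hx
  choose k hk using hx
  intro i
  refine ⟨∑ j, M i j * k j, ?_⟩
  have : (toR M).mulVecLin.toAddMonoidHom x i = ∑ j, (M i j : ℝ) * (k j : ℝ) := by
    simp [toR, Matrix.mulVec, dotProduct, hk, Matrix.map_apply]
  rw [this]
  push_cast
  ring

/-- The endomorphism of the torus induced by an integer matrix. -/
def torusHom {d : ℕ} (M : Matrix (Fin d) (Fin d) ℤ) : Torus d →+ Torus d :=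
  QuotientAddGroup.map _ _ (toR M).mulVecLin.toAddMonoidHom (latticeMap_aux M)

/-- The solenoid `S_A`, as an additive subgroup of `(𝕋^d)^ℕ`. -/
def solenoid {d : ℕ} (A : Matrix (Fin d) (Fin d) ℤ) : AddSubgroup (ℕ → Torus d) where
  carrier := {z | ∀ n, torusHom Aᵀ (z (n + 1)) = z n}
  zero_mem' := by intro n; simp
  add_mem' := by
    intro a b ha hb n
    simp only [Pi.add_apply, map_add, ha n, hb n]
  neg_mem' := by
    intro a ha n
    simp only [Pi.neg_apply, map_neg, ha n]

/-- The shift automorphism σ_A of the solenoid (written on the ambient space). -/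
def sigmaA {d : ℕ} (A : Matrix (Fin d) (Fin d) ℤ) (z : ℕ → Torus d) : ℕ → Torus d
  | 0 => torusHom Aᵀ (z 0)
  | n + 1 => z n

/-- The embedding î : ℝ^d → S_A, î(x) = (π((Aᵀ)^{-n} x))ₙ. -/
def ihat {d : ℕ} (A : Matrix (Fin d) (Fin d) ℤ) (x : Fin d → ℝ) : ℕ → Torus d :=
  fun n => torusMk d ((((toR A)ᵀ)⁻¹ ^ n).mulVec x)

end

/-!
The embedding `î` intertwines the linear map `Aᵀ` on `ℝ^d` with the shift: `σ_A ∘ î = î ∘ Aᵀ`.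
Pushing Lebesgue measure forward along both sides, the claim reduces to the change of variables
`(Aᵀ)_* vol = |det A|⁻¹ • vol`; here `det A ≠ 0` since `0` is not an eigenvalue of an
expansive matrix.
-/

open scoped ENNReal

theorem Expansive.det_ne_zero {d : ℕ} {A : Matrix (Fin d) (Fin d) ℤ} (hA : Expansive A) :
    A.det ≠ 0 := by
  intro hdet
  have hroot : (A.map (Int.cast : ℤ → ℂ)).charpoly.IsRoot 0 := by
    rw [Polynomial.IsRoot, eval_charpoly, map_zero, zero_sub, det_neg, ← Int.cast_det, hdet,
      Int.cast_zero, mul_zero]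
  exact (by norm_num : ¬(1 : ℝ) < ‖(0 : ℂ)‖) (hA 0 hroot)

theorem det_toR {d : ℕ} (M : Matrix (Fin d) (Fin d) ℤ) : (toR M).det = M.det :=
  (Int.cast_det M).symm

theorem toR_transpose {d : ℕ} (M : Matrix (Fin d) (Fin d) ℤ) : toR Mᵀ = (toR M)ᵀ :=
  transpose_map.symm

theorem torusHom_torusMk {d : ℕ} (M : Matrix (Fin d) (Fin d) ℤ) (x : Fin d → ℝ) :
    torusHom M (torusMk d x) = torusMk d (toR M *ᵥ x) :=
  QuotientAddGroup.map_mk' _ _ _ (latticeMap_aux M) x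

theorem continuous_torusHom {d : ℕ} (M : Matrix (Fin d) (Fin d) ℤ) :
    Continuous (torusHom M) := by
  rw [(QuotientAddGroup.isQuotientMap_mk (intLattice d)).continuous_iff]
  have hcomp : torusHom M ∘ QuotientAddGroup.mk = torusMk d ∘ (toR M).mulVecLin :=
    funext (torusHom_torusMk M)
  rw [hcomp]
  exact continuous_quot_mk.comp (toR M).mulVecLin.continuous_of_finiteDimensional

theorem continuous_ihat {d : ℕ} (A : Matrix (Fin d) (Fin d) ℤ) : Continuous (ihat A) :=
  continuous_pi fun n =>
    continuous_quot_mk.comp (((toR A)ᵀ)⁻¹ ^ n).mulVecLin.continuous_of_finiteDimensional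

theorem continuous_sigmaA {d : ℕ} (A : Matrix (Fin d) (Fin d) ℤ) : Continuous (sigmaA A) := by
  refine continuous_pi fun n => ?_
  cases n with
  | zero => exact (continuous_torusHom Aᵀ).comp (continuous_apply 0)
  | succ n => exact continuous_apply n

theorem sigmaA_comp_ihat {d : ℕ} {A : Matrix (Fin d) (Fin d) ℤ} (hdet : A.det ≠ 0) :
    sigmaA A ∘ ihat A = ihat A ∘ ((toR A)ᵀ).mulVecLin := by
  have hunit : IsUnit ((toR A)ᵀ).det := by
    rw [det_transpose, det_toR, isUnit_iff_ne_zero]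
    exact_mod_cast hdet
  funext x n
  cases n with
  | zero =>
    simp only [Function.comp_apply, sigmaA, ihat, pow_zero, one_mulVec, torusHom_torusMk,
      toR_transpose, mulVecLin_apply]
  | succ n =>
    simp only [Function.comp_apply, sigmaA, ihat, mulVecLin_apply, mulVec_mulVec,
      pow_succ, mul_assoc, nonsing_inv_mul _ hunit, mul_one]

theorem ENNReal.ofReal_abs_inv_intCast {n : ℤ} (hn : n ≠ 0) :
    ENNReal.ofReal |(n : ℝ)⁻¹| = (n.natAbs : ℝ≥0∞)⁻¹ := by
  rw [abs_inv, ← Int.cast_abs, Int.abs_eq_natAbs, Int.cast_natCast,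
    ENNReal.ofReal_inv_of_pos (by exact_mod_cast Int.natAbs_pos.mpr hn), ENNReal.ofReal_natCast]

theorem MeasureTheory.Measure.map_map_eq_smul_of_semiconj {E X : Type*} [NormedAddCommGroup E]
    [NormedSpace ℝ E] [MeasurableSpace E] [BorelSpace E] [FiniteDimensional ℝ E]
    [MeasurableSpace X] (μ : Measure E) [μ.IsAddHaarMeasure] {f : E → X} {g : X → X}
    (hf : Measurable f) (hg : Measurable g) {L : E →ₗ[ℝ] E} (hL : LinearMap.det L ≠ 0)
    (hsemi : g ∘ f = f ∘ L) :
    (μ.map f).map g = ENNReal.ofReal |(LinearMap.det L)⁻¹| • μ.map f := by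
  rw [Measure.map_map hg hf, hsemi,
    ← Measure.map_map hf L.continuous_of_finiteDimensional.measurable,
    Measure.map_linearMap_addHaar_eq_smul_addHaar μ hL, Measure.map_smul]

theorem statement2_general (d : ℕ) (A : Matrix (Fin d) (Fin d) ℤ)
    (hA : Expansive A) :
    letI : MeasurableSpace (ℕ → Torus d) := borel (ℕ → Torus d)
    (Measure.map (sigmaA A) (Measure.map (ihat A) (volume : Measure (Fin d → ℝ)))
        = ((A.det.natAbs : ℝ≥0∞))⁻¹ • Measure.map (ihat A) (volume : Measure (Fin d → ℝ))) ∧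
      ∀ f : (ℕ → Torus d) → ℝ≥0∞, Measurable f →
        ∫⁻ z, f (sigmaA A z) ∂(Measure.map (ihat A) (volume : Measure (Fin d → ℝ)))
          = ((A.det.natAbs : ℝ≥0∞))⁻¹ *
              ∫⁻ z, f z ∂(Measure.map (ihat A) (volume : Measure (Fin d → ℝ))) := by
  let : MeasurableSpace (ℕ → Torus d) := borel (ℕ → Torus d)
  have : BorelSpace (ℕ → Torus d) := ⟨rfl⟩
  have hdet : A.det ≠ 0 := hA.det_ne_zero
  have hdetL : LinearMap.det ((toR A)ᵀ).mulVecLin = A.det := by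
    rw [← toLin'_apply', LinearMap.det_toLin', det_transpose, det_toR]
  have hmap : (volume.map (ihat A)).map (sigmaA A)
      = (A.det.natAbs : ℝ≥0∞)⁻¹ • volume.map (ihat A) := by
    rw [Measure.map_map_eq_smul_of_semiconj volume (continuous_ihat A).measurable
      (continuous_sigmaA A).measurable (by rw [hdetL]; exact_mod_cast hdet)
      (sigmaA_comp_ihat hdet), hdetL, ENNReal.ofReal_abs_inv_intCast hdet]
  refine ⟨hmap, fun f hf => ?_⟩
  rw [← lintegral_map hf (continuous_sigmaA A).measurable, hmap, lintegral_smul_measure,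
    smul_eq_mul]

/-- the pushforward μ̃ of Lebesgue measure under î satisfies
(σ_A)_* μ̃ = |det A|⁻¹ · μ̃; equivalently ∫ f∘σ_A dμ̃ = |det A|⁻¹ ∫ f dμ̃ for
every Borel measurable f ≥ 0. -/
theorem statement2 (d : ℕ) (hd : 0 < d) (A : Matrix (Fin d) (Fin d) ℤ)
    (hA : Expansive A) :
    letI : MeasurableSpace (ℕ → Torus d) := borel (ℕ → Torus d)
    (Measure.map (sigmaA A) (Measure.map (ihat A) (volume : Measure (Fin d → ℝ)))
        = ((A.det.natAbs : ℝ≥0∞))⁻¹ • Measure.map (ihat A) (volume : Measure (Fin d → ℝ))) ∧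
      ∀ f : (ℕ → Torus d) → ℝ≥0∞, Measurable f →
        ∫⁻ z, f (sigmaA A z) ∂(Measure.map (ihat A) (volume : Measure (Fin d → ℝ)))
          = ((A.det.natAbs : ℝ≥0∞))⁻¹ *
              ∫⁻ z, f z ∂(Measure.map (ihat A) (volume : Measure (Fin d → ℝ))) :=
  statement2_general d A hA
end

section
/- Let C = (ζ_0, …, ζ_{p−1}) be a cycle of length p in 𝕋^d with the ζ_j pairwise distinct. Then the map î_C : ℝ^d × ℤ/pℤ → S_A(C) defined by î_C(x, j) = σ_A^{−j}(χ_C) + î(x) is a bijection, and it satisfies î_C(A^T x, j − 1) = σ_A(î_C(x, j)) for all x ∈ ℝ^d and j ∈ ℤ/pℤ. -/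
open Matrix MeasureTheory Filter Topology

/-- The set S_A(C) = ⋃_{j} (σ_A^{-j}(χ_C) + î(ℝ^d)), where χ_C is the p-periodic
sequence determined by the cycle ζ and σ_A^{-j} is the j-fold left shift. -/
def cycleCoset {d : ℕ} (p : ℕ) (A : Matrix (Fin d) (Fin d) ℤ)
    (ζ : ZMod p → Torus d) : Set (ℕ → Torus d) :=
  ⋃ j : ZMod p, Set.range fun x : Fin d → ℝ =>
    (fun n : ℕ => ζ ((n : ZMod p) + j)) + ihat A x

/-- The map î_C : ℝ^d × ℤ/pℤ → S_A(C), î_C(x,j) = σ_A^{-j}(χ_C) + î(x). -/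
noncomputable def ihatC {d : ℕ} (p : ℕ) (A : Matrix (Fin d) (Fin d) ℤ)
    (ζ : ZMod p → Torus d) (q : (Fin d → ℝ) × ZMod p) : ℕ → Torus d :=
  (fun n : ℕ => ζ ((n : ZMod p) + q.2)) + ihat A q.1

/-!
Since `A` is expansive, `(Aᵀ)⁻¹` has spectral radius `< 1`, so by Gelfand's formula
`(Aᵀ)⁻ⁿ u → 0` for every `u`. If `î_C(x, j) = î_C(x', j')`, then `î(x - x')` is a `p`-periodic
sequence in the torus. Writing `a n = (Aᵀ)⁻ⁿ (x - x')`, the differences `a (n + p) - a n` are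
lattice points tending to `0`, hence eventually `0`; a sequence that tends to `0` and is
eventually periodic is eventually `0`, which forces `x = x'`, and then `ζ j = ζ j'`.
The conjugacy identity is the `σ_A`-equivariance of `î` and of the shifted cycle.
-/

theorem tendsto_pow_atTop_nhds_zero_of_spectralRadius_lt_one {𝔸 : Type*} [NormedRing 𝔸]
    [NormedAlgebra ℂ 𝔸] [CompleteSpace 𝔸] {a : 𝔸} (ha : spectralRadius ℂ a < 1) :
    Tendsto (fun n : ℕ => a ^ n) atTop (𝓝 0) := by
  obtain ⟨r, hρr, hr1⟩ := ENNReal.lt_iff_exists_nnreal_btwn.mp ha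
  have hgelfand := spectrum.pow_nnnorm_pow_one_div_tendsto_nhds_spectralRadius a
  have hbound : ∀ᶠ n : ℕ in atTop, ‖a ^ n‖ ≤ r ^ n := by
    filter_upwards [hgelfand.eventually_lt_const hρr, eventually_ge_atTop 1] with n hn hn1
    have hn0 : (n : ℝ) ≠ 0 := Nat.cast_ne_zero.mpr (by omega)
    have := ENNReal.rpow_le_rpow hn.le n.cast_nonneg
    rw [← ENNReal.rpow_mul, one_div, inv_mul_cancel₀ hn0, ENNReal.rpow_one,
      ENNReal.rpow_natCast] at this
    exact_mod_cast this
  exact squeeze_zero_norm' hbound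
    (tendsto_pow_atTop_nhds_zero_of_lt_one r.coe_nonneg (by exact_mod_cast hr1))

theorem Matrix.tendsto_pow_mulVec_of_tendsto_map_ofReal_pow {n : Type*} [Fintype n]
    [DecidableEq n] {M : Matrix n n ℝ}
    (hM : Tendsto (fun k : ℕ => M.map Complex.ofReal ^ k) atTop (𝓝 0)) (u : n → ℝ) :
    Tendsto (fun k : ℕ => (M ^ k) *ᵥ u) atTop (𝓝 0) := by
  let F : Matrix n n ℂ → n → ℝ := fun X i => ((X *ᵥ (Complex.ofRealHom ∘ u)) i).re
  have hF : Continuous F := by fun_prop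
  have hFpow (k : ℕ) : F (M.map Complex.ofReal ^ k) = (M ^ k) *ᵥ u := by
    ext i
    have hpow : M.map Complex.ofReal ^ k = (M ^ k).map Complex.ofRealHom :=
      (map_pow Complex.ofRealHom.mapMatrix M k).symm
    simp only [F, hpow, ← RingHom.map_mulVec, Complex.ofRealHom_eq_coe, Complex.ofReal_re]
  have hF0 : F 0 = 0 := by ext; simp [F]
  simpa only [Function.comp_def, hFpow, hF0] using (hF.tendsto 0).comp hM

theorem eq_of_tendsto_of_periodic_from {X : Type*} [TopologicalSpace X] [T2Space X]
    {a : ℕ → X} {x : X} {p N : ℕ} (hp : 0 < p) (ha : Tendsto a atTop (𝓝 x))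
    (hper : ∀ n ≥ N, a (n + p) = a n) : a N = x := by
  have hconst (k : ℕ) : a (N + k * p) = a N := by
    induction k with
    | zero => simp
    | succ k ih => rw [add_one_mul, ← add_assoc, hper _ (by omega), ih]
  have hsub : Tendsto (fun k : ℕ => N + k * p) atTop atTop :=
    tendsto_atTop_mono (fun k => (Nat.le_mul_of_pos_right k hp).trans (Nat.le_add_left _ _))
      tendsto_id
  exact tendsto_nhds_unique (by simpa only [Function.comp_def, hconst] using ha.comp hsub)
    tendsto_const_nhds |>.symm

namespace Expansive

variable {d : ℕ} {A : Matrix (Fin d) (Fin d) ℤ}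

theorem det_ne_zero_s5 (hA : Expansive A) : A.det ≠ 0 := by
  intro h
  have hroot : (A.map (Int.cast : ℤ → ℂ)).charpoly.IsRoot 0 := by
    rw [← Matrix.mem_spectrum_iff_isRoot_charpoly, spectrum.zero_mem_iff,
      Matrix.isUnit_iff_isUnit_det, ← Int.cast_det, h]
    simp
  exact absurd (hA 0 hroot) (by simp)

theorem isUnit_det_transpose_toR (hA : Expansive A) : IsUnit (toR A)ᵀ.det := by
  rw [Matrix.det_transpose, toR, ← Int.cast_det, isUnit_iff_ne_zero, Int.cast_ne_zero]
  exact hA.det_ne_zero_s5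

attribute [local instance] Matrix.linftyOpNormedRing Matrix.linftyOpNormedAlgebra

theorem spectralRadius_map_ofReal_inv_transpose_lt_one (hA : Expansive A) :
    spectralRadius ℂ (((toR A)ᵀ)⁻¹.map Complex.ofReal) < 1 := by
  have hN : (toR A)ᵀ.map Complex.ofReal = (A.map (Int.cast : ℤ → ℂ))ᵀ := by ext; simp [toR]
  have hmap (X Y : Matrix (Fin d) (Fin d) ℝ) :
      X.map Complex.ofReal * Y.map Complex.ofReal = (X * Y).map Complex.ofReal :=
    (map_mul Complex.ofRealHom.mapMatrix X Y).symm
  let u : (Matrix (Fin d) (Fin d) ℂ)ˣ :=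
    { val := (toR A)ᵀ.map Complex.ofReal
      inv := ((toR A)ᵀ)⁻¹.map Complex.ofReal
      val_inv := by
        rw [hmap, Matrix.mul_nonsing_inv _ hA.isUnit_det_transpose_toR]; simp
      inv_val := by
        rw [hmap, Matrix.nonsing_inv_mul _ hA.isUnit_det_transpose_toR]; simp }
  rcases subsingleton_or_nontrivial (Matrix (Fin d) (Fin d) ℂ) with _ | _
  · simp [spectrum.SpectralRadius.of_subsingleton]
  refine spectrum.spectralRadius_lt_of_forall_lt (↑u⁻¹ : Matrix (Fin d) (Fin d) ℂ) fun z hz => ?_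
  rw [← spectrum.inv₀_mem_iff, show (u : Matrix (Fin d) (Fin d) ℂ) = _ from hN,
    Matrix.mem_spectrum_iff_isRoot_charpoly, Matrix.charpoly_transpose] at hz
  have := hA _ hz
  rw [norm_inv, one_lt_inv_iff₀] at this
  exact_mod_cast this.2

theorem tendsto_inv_transpose_pow_mulVec (hA : Expansive A) (u : Fin d → ℝ) :
    Tendsto (fun n : ℕ => (((toR A)ᵀ)⁻¹ ^ n) *ᵥ u) atTop (𝓝 0) :=
  Matrix.tendsto_pow_mulVec_of_tendsto_map_ofReal_pow
    (tendsto_pow_atTop_nhds_zero_of_spectralRadius_lt_one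
      hA.spectralRadius_map_ofReal_inv_transpose_lt_one) u

end Expansive

section Torus

variable {d : ℕ}

theorem torusMk_eq_zero_iff {x : Fin d → ℝ} : torusMk d x = 0 ↔ x ∈ intLattice d :=
  QuotientAddGroup.eq_zero_iff x

theorem eq_zero_of_mem_intLattice_of_norm_lt_one {x : Fin d → ℝ} (hx : x ∈ intLattice d)
    (h : ‖x‖ < 1) : x = 0 := by
  funext i
  obtain ⟨k, hk⟩ := hx i
  have hk1 : |(k : ℝ)| < 1 := hk ▸ (norm_le_pi_norm x i).trans_lt h
  have hk0 : k = 0 := Int.abs_lt_one_iff.mp (by exact_mod_cast hk1)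
  simp [hk, hk0]

theorem eventually_eq_zero_of_tendsto_zero_of_mem_intLattice {x : ℕ → Fin d → ℝ}
    (hx : Tendsto x atTop (𝓝 0)) (hmem : ∀ n, x n ∈ intLattice d) :
    ∀ᶠ n in atTop, x n = 0 := by
  filter_upwards [hx (Metric.ball_mem_nhds 0 one_pos)] with n hn
  exact eq_zero_of_mem_intLattice_of_norm_lt_one (hmem n) (by simpa using hn)

end Torus

section Solenoid

variable {d : ℕ} {A : Matrix (Fin d) (Fin d) ℤ}

theorem ihat_sub (x y : Fin d → ℝ) : ihat A (x - y) = ihat A x - ihat A y := by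
  funext n
  simp [ihat, Matrix.mulVec_sub]

theorem Expansive.eq_zero_of_ihat_periodic (hA : Expansive A) {p : ℕ} (hp : 0 < p)
    {u : Fin d → ℝ} (hu : ∀ n, ihat A u (n + p) = ihat A u n) : u = 0 := by
  set T := ((toR A)ᵀ)⁻¹
  have hdiff (n : ℕ) : (T ^ (n + p)) *ᵥ u - (T ^ n) *ᵥ u = (T ^ n) *ᵥ ((T ^ p) *ᵥ u - u) := by
    rw [Matrix.mulVec_sub, Matrix.mulVec_mulVec, ← pow_add]
  have hmem (n : ℕ) : (T ^ (n + p)) *ᵥ u - (T ^ n) *ᵥ u ∈ intLattice d := by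
    rw [← torusMk_eq_zero_iff, map_sub, sub_eq_zero]
    exact hu n
  obtain ⟨N, hN⟩ := eventually_atTop.mp <| eventually_eq_zero_of_tendsto_zero_of_mem_intLattice
    (by simpa only [hdiff] using hA.tendsto_inv_transpose_pow_mulVec _) hmem
  have haN : (T ^ N) *ᵥ u = 0 :=
    eq_of_tendsto_of_periodic_from hp (hA.tendsto_inv_transpose_pow_mulVec u)
      fun n hn => sub_eq_zero.mp (hN n hn)
  have hinv : (toR A)ᵀ ^ N * T ^ N = 1 := by
    rw [Matrix.inv_pow', Matrix.mul_nonsing_inv]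
    simpa [Matrix.det_pow] using hA.isUnit_det_transpose_toR.pow N
  rw [← Matrix.one_mulVec u, ← hinv, ← Matrix.mulVec_mulVec, haN, Matrix.mulVec_zero]

theorem ihat_mulVec_transpose (hA : IsUnit (toR A)ᵀ.det) (x : Fin d → ℝ) :
    ihat A ((toR A)ᵀ *ᵥ x) = sigmaA A (ihat A x) := by
  funext n
  cases n with
  | zero =>
    simp only [ihat, sigmaA, pow_zero, Matrix.one_mulVec]
    rfl
  | succ n =>
    simp only [ihat, sigmaA, Matrix.mulVec_mulVec, pow_succ, Matrix.mul_assoc,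
      Matrix.nonsing_inv_mul _ hA, Matrix.mul_one]

theorem sigmaA_add (z w : ℕ → Torus d) : sigmaA A (z + w) = sigmaA A z + sigmaA A w := by
  funext n
  cases n <;> simp [sigmaA]

theorem sigmaA_cycle {p : ℕ} {ζ : ZMod p → Torus d}
    (hζ : ∀ j : ZMod p, torusHom Aᵀ (ζ (j + 1)) = ζ j) (j : ZMod p) :
    sigmaA A (fun n : ℕ => ζ (n + j)) = fun n : ℕ => ζ (n + (j - 1)) := by
  funext n
  cases n with
  | zero => simpa [sigmaA] using hζ (j - 1)
  | succ n => simp only [sigmaA]; congr 1; push_cast; ring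

end Solenoid

section CycleCoset

variable {d p : ℕ} {A : Matrix (Fin d) (Fin d) ℤ} {ζ : ZMod p → Torus d}

theorem Expansive.ihatC_injective (hA : Expansive A) (hp : 0 < p) (hζ : Function.Injective ζ) :
    Function.Injective (ihatC p A ζ) := by
  rintro ⟨x, j⟩ ⟨x', j'⟩ h
  have hcoord (n : ℕ) : ihat A (x - x') n = ζ (n + j') - ζ (n + j) := by
    rw [ihat_sub, Pi.sub_apply, sub_eq_sub_iff_add_eq_add, add_comm]
    exact congrFun h n
  obtain rfl : x = x' := sub_eq_zero.mp <| hA.eq_zero_of_ihat_periodic hp fun n => by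
    simp only [hcoord, Nat.cast_add, ZMod.natCast_self, add_zero]
  have h0 := congrFun h 0
  simp only [ihatC, Pi.add_apply, Nat.cast_zero, zero_add, add_left_inj] at h0
  rw [hζ h0]

theorem range_ihatC : Set.range (ihatC p A ζ) = cycleCoset p A ζ := by
  ext z
  simpa [cycleCoset, ihatC] using exists_comm

theorem ihatC_mulVec_transpose (hA : IsUnit (toR A)ᵀ.det)
    (hζ : ∀ j : ZMod p, torusHom Aᵀ (ζ (j + 1)) = ζ j) (x : Fin d → ℝ) (j : ZMod p) :
    ihatC p A ζ ((toR A)ᵀ *ᵥ x, j - 1) = sigmaA A (ihatC p A ζ (x, j)) := by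
  simp only [ihatC, sigmaA_add, sigmaA_cycle hζ, ihat_mulVec_transpose hA]

end CycleCoset

theorem statement5_general (d : ℕ) (A : Matrix (Fin d) (Fin d) ℤ)
    (hA : Expansive A) (p : ℕ) (hp : 0 < p) (ζ : ZMod p → Torus d)
    (hζ : ∀ j : ZMod p, torusHom Aᵀ (ζ (j + 1)) = ζ j)
    (hdistinct : Function.Injective ζ) :
    Function.Injective (ihatC p A ζ) ∧
    Set.range (ihatC p A ζ) = cycleCoset p A ζ ∧
    ∀ (x : Fin d → ℝ) (j : ZMod p),
      ihatC p A ζ ((toR A)ᵀ.mulVec x, j - 1) = sigmaA A (ihatC p A ζ (x, j)) :=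
  ⟨hA.ihatC_injective hp hdistinct, range_ihatC,
    ihatC_mulVec_transpose hA.isUnit_det_transpose_toR hζ⟩

/-- î_C is a bijection from ℝ^d × ℤ/pℤ onto S_A(C), and satisfies
î_C(Aᵀx, j−1) = σ_A(î_C(x,j)). -/
theorem statement5 (d : ℕ) (hd : 0 < d) (A : Matrix (Fin d) (Fin d) ℤ)
    (hA : Expansive A) (p : ℕ) (hp : 0 < p) (ζ : ZMod p → Torus d)
    (hζ : ∀ j : ZMod p, torusHom Aᵀ (ζ (j + 1)) = ζ j)
    (hdistinct : Function.Injective ζ) :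
    Function.Injective (ihatC p A ζ) ∧
    Set.range (ihatC p A ζ) = cycleCoset p A ζ ∧
    ∀ (x : Fin d → ℝ) (j : ZMod p),
      ihatC p A ζ ((toR A)ᵀ.mulVec x, j - 1) = sigmaA A (ihatC p A ζ (x, j)) :=
  statement5_general d A hA p hp ζ hζ hdistinct
end
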